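/- arXiv:1809.03190 — 2 statements merged into one kernel-verified Lean document; each statement's English description precedes it below -/
import Mathlib

section
/- The convex hull of the ten points ±(1,1,1,-1), ±(1,-1,1,1), ±(1,1,1,1), ±(1,1,-1,-1), ±(1,-1,-1,1) in ℝ⁴ has all ten points as vertices (extreme points). -/
/-!
All ten points have coordinates `±1`, so they are vertices of the cube `[-1, 1]⁴`. The cube is
convex and contains the points, hence their convex hull, and an extreme point of a set that lies
in a subset is an extreme point of that subset.
-/

open Set

theorem mem_extremePoints_convexHull_of_subset {𝕜 E : Type*} [Semiring 𝕜] [PartialOrder 𝕜]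
    [AddCommMonoid E] [Module 𝕜 E] {S A : Set E} {x : E}
    (hSA : S ⊆ A) (hA : Convex 𝕜 A) (hx : x ∈ S) (hxA : x ∈ A.extremePoints 𝕜) :
    x ∈ (convexHull 𝕜 S).extremePoints 𝕜 :=
  inter_extremePoints_subset_extremePoints_of_subset (convexHull_min hSA hA)
    ⟨subset_convexHull 𝕜 S hx, hxA⟩

theorem mem_extremePoints_Icc_of_forall_eq_or_eq {ι : Type*} {a b x : ι → ℝ} (hab : a ≤ b)
    (hx : ∀ i, x i = a i ∨ x i = b i) : x ∈ (Icc a b).extremePoints ℝ := by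
  rw [← pi_univ_Icc, extremePoints_pi]
  simpa [hab _] using hx

/-- All ten points `±(1,1,1,-1), ±(1,-1,1,1), ±(1,1,1,1), ±(1,1,-1,-1),
±(1,-1,-1,1)` are extreme points of their convex hull. -/
theorem ten_points_are_vertices :
    let S : Set (Fin 4 → ℝ) :=
      {![1,1,1,-1], ![1,-1,1,1], ![1,1,1,1], ![1,1,-1,-1], ![1,-1,-1,1],
       -![1,1,1,-1], -![1,-1,1,1], -![1,1,1,1], -![1,1,-1,-1], -![1,-1,-1,1]}
    ∀ x ∈ S, x ∈ Set.extremePoints ℝ (convexHull ℝ S) := by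
  intro S x hx
  have hsigns : ∀ y ∈ S, ∀ i, y i = -1 ∨ y i = 1 := by
    intro y hy i
    simp only [S, mem_insert_iff, mem_singleton_iff] at hy
    rcases hy with rfl | rfl | rfl | rfl | rfl | rfl | rfl | rfl | rfl | rfl <;>
      fin_cases i <;> norm_num
  have hvertex : ∀ y ∈ S, y ∈ (Icc (-1) 1).extremePoints ℝ := fun y hy =>
    mem_extremePoints_Icc_of_forall_eq_or_eq (fun _ => by norm_num) (hsigns y hy)
  exact mem_extremePoints_convexHull_of_subset (fun y hy => (hvertex y hy).1) (convex_Icc _ _) hx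
    (hvertex x hx)
end

section
/- Let N : ℤ^{2g} → ℕ be a semi-norm restricted to the lattice and suppose there exists ε ∈ {0,1}^{2g} such that N(a) ≡ ⟨ε, a⟩ (mod 2) for all a ∈ ℤ^{2g} (parity constraint from an intersection norm). Then any two vertices of the dual unit ball of (the extension of) N that lie in ℤ^{2g} are congruent modulo 2. -/
/-!
Let `w` be a lattice vertex of the dual ball and `f = N - ⟨w, ·⟩`. Then `f` is nonnegative and
sublinear, takes integer values on the lattice, with parity `⟨ε - w, ·⟩`, and since `w` is
extreme there is no `ψ ≠ 0` with `|⟨ψ, ·⟩| ≤ f` (otherwise `w ± ψ` lie in the ball). It suffices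
to show that for such an `f` the parity vector `ε - w` is even: then every lattice vertex is
congruent to `ε` mod 2.

Let `V` be the span of the lattice points of the lineality space `{x | f x = 0 = f (-x)}`.
If `V` is everything, `f = 0` and the parity is even. If some lattice zero `x₀` of `f` has
`f (-x₀) ≠ 0`, pass to `x ↦ inf_t f (t x₀ + x)`: it lies below `f`, is still integral with the
same parity (the infimum is attained along lattice points since `f (x₀) = 0` makes `f` decrease
in the direction `x₀`), and its `V` contains `x₀`; induct on `V`. Otherwise, simultaneous
Dirichlet approximation shows that every zero of `f` lies in `V`, so `f` is bounded below by a
positive multiple of the norm of the component in a complement of `V`, and any nonzero linear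
form vanishing on `V`, suitably scaled, is a `ψ` with `|ψ| ≤ f`.
-/

open Set

section

variable {E : Type*} [AddCommGroup E] [Module ℝ E]

structure IsNonnegSublinear (f : E → ℝ) : Prop where
  nonneg : ∀ x, 0 ≤ f x
  map_add_le : ∀ x y, f (x + y) ≤ f x + f y
  map_smul_of_nonneg : ∀ t : ℝ, 0 ≤ t → ∀ x, f (t • x) = t * f x

noncomputable def infAlong (f : E → ℝ) (x₀ x : E) : ℝ :=
  ⨅ t : ℝ, f (t • x₀ + x)

theorem le_infAlong {f : E → ℝ} {x₀ x : E} {c : ℝ} (h : ∀ t : ℝ, c ≤ f (t • x₀ + x)) :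
    c ≤ infAlong f x₀ x :=
  le_ciInf h

end

namespace IsNonnegSublinear

section VectorSpace

variable {E : Type*} [AddCommGroup E] [Module ℝ E] {f : E → ℝ}

theorem map_zero (hf : IsNonnegSublinear f) : f 0 = 0 := by
  simpa using hf.map_smul_of_nonneg 0 le_rfl 0

theorem convexOn (hf : IsNonnegSublinear f) : ConvexOn ℝ univ f :=
  ⟨convex_univ, fun x _ y _ a b ha hb _ => by
    simpa only [hf.map_smul_of_nonneg a ha, hf.map_smul_of_nonneg b hb, smul_eq_mul]
      using hf.map_add_le (a • x) (b • y)⟩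

def lineality (hf : IsNonnegSublinear f) : Submodule ℝ E where
  carrier := {x | f x = 0 ∧ f (-x) = 0}
  zero_mem' := by simp [hf.map_zero]
  add_mem' := by
    rintro x y ⟨hx, hx'⟩ ⟨hy, hy'⟩
    refine ⟨le_antisymm ?_ (hf.nonneg _), le_antisymm ?_ (hf.nonneg _)⟩
    · simpa [hx, hy] using hf.map_add_le x y
    · simpa [hx', hy', add_comm] using hf.map_add_le (-x) (-y)
  smul_mem' := by
    rintro t x ⟨hx, hx'⟩
    rcases le_total 0 t with ht | ht
    · simp [hf.map_smul_of_nonneg t ht, hx, ← smul_neg, hx']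
    · have h := hf.map_smul_of_nonneg (-t) (neg_nonneg.2 ht)
      refine ⟨?_, ?_⟩
      · simpa [hx'] using h (-x)
      · simpa [hx] using h x

theorem map_add_of_mem_lineality (hf : IsNonnegSublinear f) (x : E) {v : E}
    (hv : v ∈ hf.lineality) : f (x + v) = f x := by
  refine le_antisymm ((hf.map_add_le x v).trans (by rw [hv.1, add_zero])) ?_
  simpa [hv.2] using hf.map_add_le (x + v) (-v)

theorem lineality_mono {g : E → ℝ} (hf : IsNonnegSublinear f) (hg : IsNonnegSublinear g)
    (hgf : ∀ x, g x ≤ f x) : hf.lineality ≤ hg.lineality := fun _ ⟨h, h'⟩ =>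
  ⟨le_antisymm ((hgf _).trans h.le) (hg.nonneg _), le_antisymm ((hgf _).trans h'.le) (hg.nonneg _)⟩

end VectorSpace

theorem continuous {E : Type*} [NormedAddCommGroup E] [NormedSpace ℝ E] [FiniteDimensional ℝ E]
    {f : E → ℝ} (hf : IsNonnegSublinear f) : Continuous f :=
  continuousOn_univ.1 (hf.convexOn.continuousOn isOpen_univ)

section InfAlong

variable {E : Type*} [AddCommGroup E] [Module ℝ E] {f : E → ℝ} {x₀ : E}

theorem antitone_along (hf : IsNonnegSublinear f) (h₀ : f x₀ = 0) (x : E) :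
    Antitone fun t : ℝ => f (t • x₀ + x) := fun s t hst => by
  have h := hf.map_add_le ((t - s) • x₀) (s • x₀ + x)
  rwa [hf.map_smul_of_nonneg _ (sub_nonneg.2 hst), h₀, mul_zero, zero_add, ← add_assoc,
    ← add_smul, sub_add_cancel] at h

theorem infAlong_le (hf : IsNonnegSublinear f) (x₀ x : E) (t : ℝ) :
    infAlong f x₀ x ≤ f (t • x₀ + x) :=
  ciInf_le ⟨0, by rintro _ ⟨s, rfl⟩; exact hf.nonneg _⟩ t

theorem infAlong_le_self (hf : IsNonnegSublinear f) (x : E) : infAlong f x₀ x ≤ f x := by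
  simpa using hf.infAlong_le x₀ x 0

theorem isNonnegSublinear_infAlong (hf : IsNonnegSublinear f) :
    IsNonnegSublinear (infAlong f x₀) where
  nonneg x := le_infAlong fun _ => hf.nonneg _
  map_add_le x y := by
    have key : ∀ s t : ℝ, infAlong f x₀ (x + y) ≤ f (s • x₀ + x) + f (t • x₀ + y) := fun s t =>
      calc infAlong f x₀ (x + y) ≤ f ((s + t) • x₀ + (x + y)) := hf.infAlong_le x₀ _ _
        _ = f ((s • x₀ + x) + (t • x₀ + y)) := by rw [add_smul]; abel_nf
        _ ≤ _ := hf.map_add_le _ _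
    have hy : ∀ s : ℝ, infAlong f x₀ (x + y) - f (s • x₀ + x) ≤ infAlong f x₀ y := fun s =>
      le_infAlong fun t => by linarith [key s t]
    have hx : infAlong f x₀ (x + y) - infAlong f x₀ y ≤ infAlong f x₀ x :=
      le_infAlong fun s => by linarith [hy s]
    linarith
  map_smul_of_nonneg t ht x := by
    rcases ht.eq_or_lt with rfl | ht
    · refine le_antisymm ?_ (by simpa using le_infAlong fun _ => hf.nonneg _)
      simpa [hf.map_zero] using hf.infAlong_le x₀ 0 0
    · have h : ∀ s : ℝ, f (s • x₀ + t • x) = t * f ((t⁻¹ * s) • x₀ + x) := fun s => by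
        rw [← hf.map_smul_of_nonneg t ht.le, smul_add, smul_smul, mul_inv_cancel_left₀ ht.ne']
      simp only [_root_.infAlong, h, Real.mul_iInf_of_nonneg ht.le]
      exact (mul_left_surjective₀ (inv_ne_zero ht.ne')).iInf_comp fun s => t * f (s • x₀ + x)

theorem mem_lineality_infAlong (hf : IsNonnegSublinear f) :
    x₀ ∈ (hf.isNonnegSublinear_infAlong (x₀ := x₀)).lineality := by
  refine ⟨le_antisymm ?_ (hf.isNonnegSublinear_infAlong.nonneg _),
    le_antisymm ?_ (hf.isNonnegSublinear_infAlong.nonneg _)⟩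
  · simpa [hf.map_zero] using hf.infAlong_le x₀ x₀ (-1)
  · simpa [hf.map_zero] using hf.infAlong_le x₀ (-x₀) 1

end InfAlong

theorem exists_dual_ne_zero_abs_le {E : Type*} [NormedAddCommGroup E] [NormedSpace ℝ E]
    [FiniteDimensional ℝ E] {f : E → ℝ} (hf : IsNonnegSublinear f) {V : Submodule ℝ E}
    (hV : V ≠ ⊤) (hVf : V ≤ hf.lineality) (hpos : ∀ x ∉ V, 0 < f x) :
    ∃ φ : Module.Dual ℝ E, φ ≠ 0 ∧ ∀ x, |φ x| ≤ f x := by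
  obtain ⟨U, hVU⟩ := V.exists_isCompl
  obtain ⟨u₀, hu₀U, hu₀⟩ : ∃ u ∈ U, u ≠ 0 := (Submodule.ne_bot_iff U).1 fun hU =>
    hV (by simpa [hU] using hVU.sup_eq_top)
  -- `c` is the minimum of `f` on the unit sphere of `U`
  obtain ⟨c, hc, hcU⟩ : ∃ c > 0, ∀ u ∈ U, c * ‖u‖ ≤ f u := by
    set K := Metric.sphere (0 : E) 1 ∩ U
    have hK : IsCompact K := (isCompact_sphere 0 1).inter_right U.closed_of_finiteDimensional
    have hu₀K : ‖u₀‖⁻¹ • u₀ ∈ K :=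
      ⟨by simp [norm_smul, hu₀], U.smul_mem _ hu₀U⟩
    obtain ⟨k, ⟨hk1, hkU⟩, hkmin⟩ := hK.exists_isMinOn ⟨_, hu₀K⟩ hf.continuous.continuousOn
    refine ⟨f k, hpos k fun hkV => ?_, fun u hu => ?_⟩
    · have : k = 0 := (Submodule.disjoint_def.1 hVU.disjoint) k hkV hkU
      simp [this] at hk1
    · rcases eq_or_ne u 0 with rfl | hu0
      · simp [hf.map_zero]
      · have hmem : ‖u‖⁻¹ • u ∈ K := ⟨by simp [norm_smul, hu0], U.smul_mem _ hu⟩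
        have h : f k ≤ f (‖u‖⁻¹ • u) := hkmin hmem
        rwa [hf.map_smul_of_nonneg _ (inv_nonneg.2 (norm_nonneg u)),
          le_inv_mul_iff₀ (norm_pos_iff.2 hu0), mul_comm] at h
  obtain ⟨φ₁, hφ₁, hVφ₁⟩ := V.exists_le_ker_of_lt_top hV.lt_top
  set C := ‖LinearMap.toContinuousLinearMap φ₁‖
  have hC : 0 < C := norm_pos_iff.2 fun h => hφ₁ <| LinearMap.ext fun x => by
    simpa using congrArg (· x) h
  refine ⟨(c / C) • φ₁, smul_ne_zero (div_pos hc hC).ne' hφ₁, fun x => ?_⟩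
  obtain ⟨v, hvV, u, huU, rfl⟩ := Submodule.mem_sup.1 (hVU.sup_eq_top ▸ Submodule.mem_top (x := x))
  calc |((c / C) • φ₁) (v + u)| = c / C * |φ₁ u| := by
        simp [LinearMap.mem_ker.1 (hVφ₁ hvV), abs_of_pos (div_pos hc hC)]
    _ ≤ c / C * (C * ‖u‖) := by
        gcongr
        exact (LinearMap.toContinuousLinearMap φ₁).le_opNorm u
    _ = c * ‖u‖ := by field_simp
    _ ≤ f u := hcU u huU
    _ = f (v + u) := by rw [add_comm, hf.map_add_of_mem_lineality u (hVf hvV)]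

end IsNonnegSublinear

section Lattice

variable {ι : Type*}

def IsNonnegSublinear.latticeLineality {f : (ι → ℝ) → ℝ} (hf : IsNonnegSublinear f) :
    Submodule ℝ (ι → ℝ) :=
  Submodule.span ℝ {x | x ∈ hf.lineality ∧ ∃ a : ι → ℤ, Int.cast ∘ a = x}

theorem IsNonnegSublinear.latticeLineality_le {f : (ι → ℝ) → ℝ} (hf : IsNonnegSublinear f) :
    hf.latticeLineality ≤ hf.lineality :=
  Submodule.span_le.2 fun _ hx => hx.1

variable [Fintype ι]

theorem exists_nat_smul_dist_intCast_lt (y : ι → ℝ) {η : ℝ} (hη : 0 < η) :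
    ∃ t : ℕ, 0 < t ∧ ∃ a : ι → ℤ, dist ((t : ℝ) • y) (Int.cast ∘ a) < η := by
  -- two of the points `(fract (k * y i))ᵢ` of the compact cube `[0, 1]^ι` are `η`-close
  set F : ℕ → ι → ℝ := fun k i => Int.fract (k * y i)
  have hF : ∀ k, F k ∈ univ.pi fun _ => Icc (0 : ℝ) 1 := fun k =>
    mem_univ_pi.2 fun i => ⟨Int.fract_nonneg _, (Int.fract_lt_one _).le⟩
  obtain ⟨_, -, φ, hφ, hlim⟩ := (isCompact_univ_pi fun _ => isCompact_Icc).tendsto_subseq hF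
  obtain ⟨N, hN⟩ := Metric.cauchySeq_iff'.1 hlim.cauchySeq η hη
  refine ⟨φ (N + 1) - φ N, Nat.sub_pos_of_lt (hφ N.lt_succ_self),
    fun i => ⌊(φ (N + 1) : ℝ) * y i⌋ - ⌊(φ N : ℝ) * y i⌋, ?_⟩
  have h : ((φ (N + 1) - φ N : ℕ) : ℝ) • y - Int.cast ∘
      (fun i => ⌊(φ (N + 1) : ℝ) * y i⌋ - ⌊(φ N : ℝ) * y i⌋) = F (φ (N + 1)) - F (φ N) := by
    ext i
    simp only [F, Pi.sub_apply, Pi.smul_apply, smul_eq_mul, Function.comp_apply, Int.cast_sub,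
      Int.fract, Nat.cast_sub (hφ N.lt_succ_self).le]
    ring
  rw [dist_eq_norm, h, ← dist_eq_norm]
  exact hN (N + 1) N.le_succ

structure IsParityGauge (δ : ι → ℤ) (f : (ι → ℝ) → ℝ) : Prop extends IsNonnegSublinear f where
  parity : ∀ a : ι → ℤ, ∃ m : ℤ, f (Int.cast ∘ a) = m ∧ m ≡ δ ⬝ᵥ a [ZMOD 2]

namespace IsParityGauge

variable {δ : ι → ℤ} {f : (ι → ℝ) → ℝ}

theorem eq_zero_of_lt_one (hf : IsParityGauge δ f) {a : ι → ℤ} (ha : f (Int.cast ∘ a) < 1) :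
    f (Int.cast ∘ a) = 0 := by
  obtain ⟨m, hm, -⟩ := hf.parity a
  have h0 : (0 : ℝ) ≤ m := hm ▸ hf.nonneg _
  rw [hm] at ha ⊢
  exact_mod_cast le_antisymm (Int.lt_add_one_iff.1 (by exact_mod_cast ha)) (by exact_mod_cast h0)

theorem dotProduct_modEq_zero (hf : IsParityGauge δ f) {a : ι → ℤ}
    (ha : f (Int.cast ∘ a) = 0) : δ ⬝ᵥ a ≡ 0 [ZMOD 2] := by
  obtain ⟨m, hm, hmδ⟩ := hf.parity a
  obtain rfl : m = 0 := by exact_mod_cast hm.symm.trans ha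
  exact hmδ.symm

theorem modEq_zero_of_latticeLineality_eq_top (hf : IsParityGauge δ f)
    (hV : hf.latticeLineality = ⊤) (i : ι) : δ i ≡ 0 [ZMOD 2] := by
  classical
  have hL : hf.lineality = ⊤ := top_le_iff.1 (hV ▸ hf.latticeLineality_le)
  have h := hf.dotProduct_modEq_zero (a := Pi.single i 1)
    (hL ▸ Submodule.mem_top : Int.cast ∘ Pi.single i (1 : ℤ) ∈ hf.lineality).1
  rwa [dotProduct_single, mul_one] at h

theorem mem_latticeLineality_of_eq_zero (hf : IsParityGauge δ f)
    (hsymm : ∀ a : ι → ℤ, f (Int.cast ∘ a) = 0 → f (-(Int.cast ∘ a)) = 0)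
    {y : ι → ℝ} (hy : f y = 0) : y ∈ hf.latticeLineality := by
  set V := hf.latticeLineality
  rw [← SetLike.mem_coe, ← V.closed_of_finiteDimensional.closure_eq, Metric.mem_closure_iff]
  intro η hη
  obtain ⟨ρ, hρ, hρf⟩ := Metric.continuousAt_iff.1 (hf.continuous.continuousAt (x := 0)) 1 one_pos
  obtain ⟨t, ht, a, hta⟩ := exists_nat_smul_dist_intCast_lt y (lt_min hρ hη)
  have ht' : (1 : ℝ) ≤ t := by exact_mod_cast ht
  -- `a` is a lattice point close to the zero `t • y` of `f`, so `f a < 1`, hence `f a = 0`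
  have hfa : f (Int.cast ∘ a) < 1 := by
    have hsmall := hρf (x := Int.cast ∘ a - (t : ℝ) • y)
      (by simpa [dist_eq_norm, norm_sub_rev] using hta.trans_le (min_le_left _ _))
    rw [hf.map_zero, Real.dist_eq, sub_zero] at hsmall
    calc f (Int.cast ∘ a) ≤ f ((t : ℝ) • y) + f (Int.cast ∘ a - (t : ℝ) • y) := by
          convert hf.map_add_le ((t : ℝ) • y) (Int.cast ∘ a - (t : ℝ) • y) using 2
          abel
      _ < 1 := by
          rw [hf.map_smul_of_nonneg _ t.cast_nonneg, hy, mul_zero, zero_add]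
          exact (le_abs_self _).trans_lt hsmall
  have ha0 := hf.eq_zero_of_lt_one hfa
  have haV : (Int.cast ∘ a : ι → ℝ) ∈ V := Submodule.subset_span ⟨⟨ha0, hsymm a ha0⟩, a, rfl⟩
  refine ⟨(t : ℝ)⁻¹ • Int.cast ∘ a, V.smul_mem _ haV, ?_⟩
  calc dist y ((t : ℝ)⁻¹ • Int.cast ∘ a)
        = dist ((t : ℝ)⁻¹ • (t : ℝ) • y) ((t : ℝ)⁻¹ • Int.cast ∘ a) := by
          rw [inv_smul_smul₀ (by positivity)]
    _ = (t : ℝ)⁻¹ * dist ((t : ℝ) • y) (Int.cast ∘ a) := by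
          rw [dist_smul₀, Real.norm_of_nonneg (by positivity)]
    _ ≤ dist ((t : ℝ) • y) (Int.cast ∘ a) :=
          mul_le_of_le_one_left dist_nonneg (inv_le_one_of_one_le₀ ht')
    _ < η := hta.trans_le (min_le_right _ _)

theorem isParityGauge_infAlong (hf : IsParityGauge δ f) {x₀ : ι → ℤ}
    (h₀ : f (Int.cast ∘ x₀) = 0) : IsParityGauge δ (infAlong f (Int.cast ∘ x₀)) where
  toIsNonnegSublinear := hf.isNonnegSublinear_infAlong
  parity a := by
    have hcast : ∀ k : ℕ, (Int.cast ∘ ((k : ℤ) • x₀ + a) : ι → ℝ) =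
        (k : ℝ) • Int.cast ∘ x₀ + Int.cast ∘ a := fun k => by ext; simp
    -- along the lattice points `a + k x₀` the values of `f` are integers; take the least one
    obtain ⟨m, ⟨k, hk⟩, hmin⟩ := Int.exists_least_of_bdd
      (P := fun m : ℤ => ∃ k : ℕ, f ((k : ℝ) • Int.cast ∘ x₀ + Int.cast ∘ a) = m)
      ⟨0, fun m ⟨k, hk⟩ => by exact_mod_cast hk ▸ hf.nonneg _⟩
      (by obtain ⟨m, hm, -⟩ := hf.parity a; exact ⟨m, 0, by simpa using hm⟩)
    have hval : infAlong f (Int.cast ∘ x₀) (Int.cast ∘ a) = m := by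
      refine le_antisymm (hk ▸ hf.infAlong_le _ _ _) (le_infAlong fun t => ?_)
      obtain ⟨m', hm', -⟩ := hf.parity ((⌈t⌉₊ : ℤ) • x₀ + a)
      rw [hcast] at hm'
      calc (m : ℝ) ≤ m' := by exact_mod_cast hmin m' ⟨_, hm'⟩
        _ = f ((⌈t⌉₊ : ℝ) • Int.cast ∘ x₀ + Int.cast ∘ a) := hm'.symm
        _ ≤ f (t • Int.cast ∘ x₀ + Int.cast ∘ a) := hf.antitone_along h₀ _ (Nat.le_ceil t)
    obtain ⟨m', hm', hm'δ⟩ := hf.parity ((k : ℤ) • x₀ + a)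
    obtain rfl : m' = m := by exact_mod_cast (hcast k ▸ hm').symm.trans hk
    refine ⟨m', hval, hm'δ.trans ?_⟩
    rw [dotProduct_add, dotProduct_smul, smul_eq_mul]
    simpa using ((hf.dotProduct_modEq_zero h₀).mul_left (k : ℤ)).add_right (δ ⬝ᵥ a)

theorem exists_abs_dotProduct_le (hf : IsParityGauge δ f) (hV : hf.latticeLineality ≠ ⊤)
    (hsymm : ∀ a : ι → ℤ, f (Int.cast ∘ a) = 0 → f (-(Int.cast ∘ a)) = 0) :
    ∃ ψ : ι → ℝ, ψ ≠ 0 ∧ ∀ x, |ψ ⬝ᵥ x| ≤ f x := by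
  classical
  obtain ⟨φ, hφ, hφf⟩ := hf.exists_dual_ne_zero_abs_le hV hf.latticeLineality_le
    fun x hx => (hf.nonneg x).lt_of_ne' fun h0 => hx (hf.mem_latticeLineality_of_eq_zero hsymm h0)
  refine ⟨(dotProductEquiv ℝ ι).symm φ, by simpa using hφ, fun x => ?_⟩
  simpa only [← dotProductEquiv_apply_apply, LinearEquiv.apply_symm_apply] using hφf x

theorem modEq_zero_or_exists_abs_dotProduct_le (hf : IsParityGauge δ f) :
    (∀ i, δ i ≡ 0 [ZMOD 2]) ∨ ∃ ψ : ι → ℝ, ψ ≠ 0 ∧ ∀ x, |ψ ⬝ᵥ x| ≤ f x := by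
  induction hV : hf.latticeLineality using WellFoundedGT.induction generalizing f with
  | _ V ih =>
  subst hV
  by_cases htop : hf.latticeLineality = ⊤
  · exact Or.inl (hf.modEq_zero_of_latticeLineality_eq_top htop)
  by_cases hsymm : ∀ a : ι → ℤ, f (Int.cast ∘ a) = 0 → f (-(Int.cast ∘ a)) = 0
  · exact Or.inr (hf.exists_abs_dotProduct_le htop hsymm)
  -- a lattice zero `x₀` of `f` with `f (-x₀) ≠ 0`: passing to `infAlong f x₀` enlarges the
  -- lattice lineality by `x₀` and only decreases `f`
  push Not at hsymm
  obtain ⟨x₀, h₀, h₀'⟩ := hsymm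
  have hg := hf.isParityGauge_infAlong h₀
  have hgf : ∀ x, infAlong f (Int.cast ∘ x₀) x ≤ f x := hf.infAlong_le_self
  have hlt : hf.latticeLineality < hg.latticeLineality := by
    refine SetLike.lt_iff_le_and_exists.2 ⟨Submodule.span_mono fun x hx =>
      ⟨hf.lineality_mono hg.toIsNonnegSublinear hgf hx.1, hx.2⟩, Int.cast ∘ x₀,
      Submodule.subset_span ⟨hf.mem_lineality_infAlong, x₀, rfl⟩, fun hx₀ => h₀' ?_⟩
    exact (hf.latticeLineality_le hx₀).2
  exact (ih _ hlt hg rfl).imp_right fun ⟨ψ, hψ, hψg⟩ => ⟨ψ, hψ, fun x => (hψg x).trans (hgf x)⟩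

end IsParityGauge

end Lattice

section DualBall

variable {ι : Type*} [Fintype ι]

theorem eq_zero_of_abs_dotProduct_le_of_mem_extremePoints {N : (ι → ℝ) → ℝ} {w ψ : ι → ℝ}
    (hw : w ∈ extremePoints ℝ {φ | ∀ x, φ ⬝ᵥ x ≤ N x}) (hψ : ∀ x, |ψ ⬝ᵥ x| ≤ N x - w ⬝ᵥ x) :
    ψ = 0 := by
  have hadd : w + ψ ∈ {φ | ∀ x, φ ⬝ᵥ x ≤ N x} := fun x => by
    rw [add_dotProduct]; linarith [(abs_le.1 (hψ x)).2]
  have hsub : w - ψ ∈ {φ | ∀ x, φ ⬝ᵥ x ≤ N x} := fun x => by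
    rw [sub_dotProduct]; linarith [(abs_le.1 (hψ x)).1]
  have hmid : w ∈ openSegment ℝ (w - ψ) (w + ψ) :=
    ⟨1 / 2, 1 / 2, by norm_num, by norm_num, by norm_num, by module⟩
  simpa using hw.2 hsub hadd hmid

theorem isParityGauge_sub_dotProduct {N : (ι → ℝ) → ℝ}
    (hhom : ∀ (t : ℝ) (x : ι → ℝ), N (t • x) = |t| * N x)
    (hsub : ∀ x y, N (x + y) ≤ N x + N y) {ε : ι → ℤ}
    (hpar : ∀ a : ι → ℤ, ∃ m : ℤ, N (Int.cast ∘ a) = m ∧ m ≡ ε ⬝ᵥ a [ZMOD 2])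
    {w : ι → ℤ} (hw : ∀ x, (Int.cast ∘ w) ⬝ᵥ x ≤ N x) :
    IsParityGauge (ε - w) fun x => N x - (Int.cast ∘ w) ⬝ᵥ x where
  nonneg x := sub_nonneg.2 (hw x)
  map_add_le x y := by rw [dotProduct_add]; linarith [hsub x y]
  map_smul_of_nonneg t ht x := by rw [hhom, abs_of_nonneg ht, dotProduct_smul, smul_eq_mul]; ring
  parity a := by
    obtain ⟨m, hm, hmε⟩ := hpar a
    refine ⟨m - w ⬝ᵥ a, by simp [hm, dotProduct], ?_⟩
    rw [sub_dotProduct]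
    exact hmε.sub_right _

theorem modEq_of_intCast_mem_extremePoints {N : (ι → ℝ) → ℝ}
    (hhom : ∀ (t : ℝ) (x : ι → ℝ), N (t • x) = |t| * N x)
    (hsub : ∀ x y, N (x + y) ≤ N x + N y) {ε : ι → ℤ}
    (hpar : ∀ a : ι → ℤ, ∃ m : ℤ, N (Int.cast ∘ a) = m ∧ m ≡ ε ⬝ᵥ a [ZMOD 2])
    {w : ι → ℤ} (hw : Int.cast ∘ w ∈ extremePoints ℝ {φ | ∀ x, φ ⬝ᵥ x ≤ N x}) (i : ι) :
    w i ≡ ε i [ZMOD 2] := by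
  rcases (isParityGauge_sub_dotProduct hhom hsub hpar hw.1).modEq_zero_or_exists_abs_dotProduct_le
    with heven | ⟨ψ, hψ, hψN⟩
  · have h := heven i
    simp only [Pi.sub_apply, Int.ModEq] at h ⊢
    omega
  · exact absurd (eq_zero_of_abs_dotProduct_le_of_mem_extremePoints hw hψN) hψ

end DualBall

theorem dual_ball_vertices_congruent_mod_two_general
    (g : ℕ) (N : (Fin (2 * g) → ℝ) → ℝ)
    (hhom : ∀ (t : ℝ) (x : Fin (2 * g) → ℝ), N (t • x) = |t| * N x)
    (hsub : ∀ x y, N (x + y) ≤ N x + N y)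
    (ε : Fin (2 * g) → ℤ)
    (hpar : ∀ a : Fin (2 * g) → ℤ, ∃ m : ℤ,
      N (fun i => (a i : ℝ)) = (m : ℝ) ∧ m % 2 = (∑ i, ε i * a i) % 2)
    (B : Set (Fin (2 * g) → ℝ))
    (hB : B = {φ | ∀ x, ∑ i, φ i * x i ≤ N x})
    (u v : Fin (2 * g) → ℤ)
    (hu : (fun i => (u i : ℝ)) ∈ Set.extremePoints ℝ B)
    (hv : (fun i => (v i : ℝ)) ∈ Set.extremePoints ℝ B) :
    ∀ i, 2 ∣ (u i - v i) := by
  subst hB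
  intro i
  have hui := modEq_of_intCast_mem_extremePoints hhom hsub hpar hu i
  have hvi := modEq_of_intCast_mem_extremePoints hhom hsub hpar hv i
  exact (hvi.trans hui.symm).dvd

/-- If a semi-norm `N` takes integer values on the lattice `ℤ^{2g}` with parity
given by `⟨ε, a⟩` for a fixed `ε ∈ {0,1}^{2g}`, then any two lattice vertices of
its dual unit ball are congruent mod 2. -/
theorem dual_ball_vertices_congruent_mod_two
    (g : ℕ) (N : (Fin (2 * g) → ℝ) → ℝ)
    (hnn : ∀ x, 0 ≤ N x)
    (hhom : ∀ (t : ℝ) (x : Fin (2 * g) → ℝ), N (t • x) = |t| * N x)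
    (hsub : ∀ x y, N (x + y) ≤ N x + N y)
    (ε : Fin (2 * g) → ℤ) (hε : ∀ i, ε i = 0 ∨ ε i = 1)
    (hpar : ∀ a : Fin (2 * g) → ℤ, ∃ m : ℤ,
      N (fun i => (a i : ℝ)) = (m : ℝ) ∧ m % 2 = (∑ i, ε i * a i) % 2)
    (B : Set (Fin (2 * g) → ℝ))
    (hB : B = {φ | ∀ x, ∑ i, φ i * x i ≤ N x})
    (u v : Fin (2 * g) → ℤ)
    (hu : (fun i => (u i : ℝ)) ∈ Set.extremePoints ℝ B)
    (hv : (fun i => (v i : ℝ)) ∈ Set.extremePoints ℝ B) :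
    ∀ i, 2 ∣ (u i - v i) :=
  dual_ball_vertices_congruent_mod_two_general g N hhom hsub ε hpar B hB u v hu hv
end
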